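/- arXiv:math/0412170 — 2 statements merged into one kernel-verified Lean document; each statement's English description precedes it below -/
import Mathlib

section
/- Let x = X_1 be the generating operator of the complex group algebra of the free group F_N on N ≥ 1 generators, and let τ be the canonical trace (coefficient at the identity). Suppose k = n + k' with n ≥ 1 and 0 ≤ k' < 2n. Then τ(x^k · X_n) equals the sum of binom(n,i)·(2N−1)^i · τ(x^{k'} · X_{2n−2i}) over those indices i with 1 ≤ i ≤ n−1 and 2n − 2i ≤ k', plus the term 2N·(2N−1)^{n−1} · τ(x^{k'}); in particular all terms τ(x^{k'}·X_{2n−2i}) with 2n − 2i > k' may be omitted since they vanish. -/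
/-- `Xop N n` is the operator `X_n`: the sum, in the complex group algebra
`ℂ[F_N] = MonoidAlgebra ℂ (FreeGroup (Fin N))`, of the basis elements of all
words `w` whose reduced word has length `n`. Note `Xop N 0 = 1`. -/
noncomputable def Xop (N n : ℕ) : MonoidAlgebra ℂ (FreeGroup (Fin N)) :=
  ∑ᶠ w ∈ {w : FreeGroup (Fin N) | (FreeGroup.toWord w).length = n},
    MonoidAlgebra.of ℂ (FreeGroup (Fin N)) w

/-- The canonical trace `τ` on `ℂ[F_N]`: the coefficient at the identity. -/
noncomputable def tr {N : ℕ} (a : MonoidAlgebra ℂ (FreeGroup (Fin N))) : ℂ := a.coeff 1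

/-!
For a reduced word `g ≠ 1` and a letter `s`, the word `s g` is one letter shorter when `s` cancels
the first letter of `g` (one choice of `s`) and one letter longer otherwise (`2N - 1` choices),
while every `s` sends the identity to length `1`. Hence `x X_n = X_{n+1} + (2N - 1) X_{n-1}` for
`n ≥ 2` and `x X_1 = X_2 + 2N X_0`. Iterating this three-term recurrence gives binomial expansions
of `x^m X_n` for `m < n`, in which only `X_l` with `l ≥ n - m > 0` occur (so the trace vanishes),
and of `x^n X_n = ∑_{i < n} C(n,i) (2N-1)^i X_{2n-2i} + 2N (2N-1)^{n-1} X_0`. Multiplying the latter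
by `x^{k'}` and taking traces gives the formula.
-/

open Finset

theorem sum_range_choose_succ_nsmul {M : Type*} [AddCommMonoid M] (h : ℕ → M) (m : ℕ) :
    ∑ i ∈ range (m + 1), (m + 1).choose i • h i =
      ∑ i ∈ range (m + 1), m.choose i • h i + ∑ i ∈ range m, m.choose i • h (i + 1) := by
  simp only [sum_range_succ' _ m, Nat.choose_succ_succ', add_smul, sum_add_distrib,
    Nat.choose_zero_right]
  abel

section ThreeTermRecurrence

variable {R : Type*} [Semiring R] (x : R) (X : ℕ → R) (c : ℕ)

theorem pow_mul_eq_sum_of_lt (hX : ∀ j, 2 ≤ j → x * X j = X (j + 1) + c • X (j - 1))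
    {m n : ℕ} (hmn : m < n) :
    x ^ m * X n = ∑ i ∈ range (m + 1), (m.choose i * c ^ i) • X (n + m - 2 * i) := by
  induction m with
  | zero => simp
  | succ m ih =>
    have step : ∀ i ∈ range (m + 1), x * ((m.choose i * c ^ i) • X (n + m - 2 * i)) =
        m.choose i • (c ^ i • X (n + (m + 1) - 2 * i)) +
          m.choose i • (c ^ (i + 1) • X (n + (m + 1) - 2 * (i + 1))) := by
      intro i hi
      have hi : i ≤ m := Nat.lt_succ_iff.mp (mem_range.mp hi)
      rw [mul_smul_comm, hX _ (by omega), show n + m - 2 * i + 1 = n + (m + 1) - 2 * i by omega,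
        show n + m - 2 * i - 1 = n + (m + 1) - 2 * (i + 1) by omega]
      simp only [smul_add, mul_smul, pow_succ]
    rw [pow_succ', mul_assoc, ih (by omega), mul_sum, sum_congr rfl step, sum_add_distrib,
      ← sum_choose_succ_nsmul (fun i _ ↦ c ^ i • X (n + (m + 1) - 2 * i)) m]
    simp only [mul_smul]

theorem pow_mul_self_eq_sum (hX : ∀ j, 2 ≤ j → x * X j = X (j + 1) + c • X (j - 1)) (d : ℕ)
    (hX₁ : x * X 1 = X 2 + d • X 0) {n : ℕ} (hn : 1 ≤ n) :
    x ^ n * X n = ∑ i ∈ range n, (n.choose i * c ^ i) • X (2 * n - 2 * i) +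
      (d * c ^ (n - 1)) • X 0 := by
  obtain ⟨m, rfl⟩ : ∃ m, n = m + 1 := ⟨n - 1, by omega⟩
  have step : ∀ i ∈ range m, x * ((m.choose i * c ^ i) • X (m + 1 + m - 2 * i)) =
      m.choose i • (c ^ i • X (2 * (m + 1) - 2 * i)) +
        m.choose i • (c ^ (i + 1) • X (2 * (m + 1) - 2 * (i + 1))) := by
    intro i hi
    have hi : i < m := mem_range.mp hi
    rw [mul_smul_comm, hX _ (by omega), show m + 1 + m - 2 * i + 1 = 2 * (m + 1) - 2 * i by omega,
      show m + 1 + m - 2 * i - 1 = 2 * (m + 1) - 2 * (i + 1) by omega]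
    simp only [smul_add, mul_smul, pow_succ]
  rw [pow_succ', mul_assoc, pow_mul_eq_sum_of_lt x X c hX (Nat.lt_succ_self m), mul_sum,
    sum_range_succ, sum_congr rfl step, sum_add_distrib,
    show m + 1 + m - 2 * m = 1 by omega, mul_smul_comm, hX₁]
  simp only [mul_smul]
  rw [sum_range_choose_succ_nsmul (fun i ↦ c ^ i • X (2 * (m + 1) - 2 * i)), sum_range_succ]
  simp only [Nat.choose_self, one_smul, Nat.add_sub_cancel, show 2 * (m + 1) - 2 * m = 2 by omega,
    smul_add, smul_comm (c ^ m) d]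
  abel

end ThreeTermRecurrence

namespace FreeGroup

variable {α : Type*} [DecidableEq α]

theorem norm_mk_singleton (a : α × Bool) : (mk [a]).norm = 1 := by
  simp [norm]

theorem norm_inv_mk_singleton_mul {g : FreeGroup α} {b : α × Bool} {t : List (α × Bool)}
    (hg : g.toWord = b :: t) (a : α × Bool) :
    ((mk [a])⁻¹ * g).norm = if a = b then t.length else t.length + 2 := by
  have hred : reduce (b :: t) = b :: t := hg ▸ reduce_toWord g
  rw [inv_mk, norm, toWord_mul, toWord_mk, hg]
  simp [invRev, hred, ← Prod.ext_iff, apply_ite List.length]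

theorem sum_norm_inv_mk_singleton_mul [Fintype α] {M : Type*} [AddCommMonoid M]
    {g : FreeGroup α} (hg : g ≠ 1) (f : ℕ → M) :
    ∑ a : α × Bool, f ((mk [a])⁻¹ * g).norm =
      f (g.norm - 1) + (Fintype.card (α × Bool) - 1) • f (g.norm + 1) := by
  obtain ⟨b, t, hbt⟩ := List.exists_cons_of_ne_nil (mt toWord_eq_nil_iff.mp hg)
  simp only [norm_inv_mk_singleton_mul hbt, apply_ite f]
  rw [← add_sum_erase _ _ (mem_univ b), if_pos rfl,
    sum_congr rfl fun a ha ↦ if_neg (ne_of_mem_erase ha), sum_const,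
    card_erase_of_mem (mem_univ b), card_univ, norm, hbt, List.length_cons, Nat.add_sub_cancel]

end FreeGroup

open FreeGroup MonoidAlgebra

section GroupAlgebra

variable {N : ℕ}

theorem card_fin_prod_bool : Fintype.card (Fin N × Bool) = 2 * N := by
  simp [mul_comm]

theorem coeff_Xop (n : ℕ) (g : FreeGroup (Fin N)) :
    (Xop N n).coeff g = if g.norm = n then 1 else 0 := by
  have hfin : {w : FreeGroup (Fin N) | w.toWord.length = n}.Finite :=
    (List.finite_length_eq _ n).preimage toWord_injective.injOn
  rw [Xop, finsum_mem_eq_finite_toFinset_sum _ hfin, coeff_sum, Finsupp.finsetSum_apply]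
  simp only [of_apply, coeff_single, Finsupp.single_apply, sum_ite_eq', Set.Finite.mem_toFinset,
    Set.mem_ofPred_eq]
  rfl

theorem Xop_zero : Xop N 0 = 1 := by
  ext g
  simp [coeff_Xop, one_def, coeff_single, Finsupp.single_apply, eq_comm]

theorem Xop_one_eq_sum : Xop N 1 = ∑ a : Fin N × Bool, single (mk [a]) 1 := by
  ext g
  have hmk (a : Fin N × Bool) : mk [a] = g ↔ g.toWord = [a] := by
    rw [← toWord_inj, toWord_mk, reduce_singleton, eq_comm]
  simp only [coeff_Xop, coeff_sum, Finsupp.finsetSum_apply, coeff_single, Finsupp.single_apply,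
    hmk, FreeGroup.norm]
  suffices ∀ w : List (Fin N × Bool),
      (if w.length = 1 then 1 else 0) = ∑ a : Fin N × Bool, if w = [a] then (1 : ℂ) else 0 from
    this g.toWord
  rintro (_ | ⟨b, _ | ⟨b', t⟩⟩) <;> simp

theorem coeff_Xop_one_mul_Xop (n : ℕ) (g : FreeGroup (Fin N)) :
    (Xop N 1 * Xop N n).coeff g =
      ∑ a : Fin N × Bool, if ((mk [a])⁻¹ * g).norm = n then 1 else 0 := by
  rw [Xop_one_eq_sum, sum_mul, coeff_sum, Finsupp.finsetSum_apply]
  simp only [coeff_single_mul_apply, one_mul, coeff_Xop]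

theorem Xop_one_mul_Xop {n : ℕ} (hn : 2 ≤ n) :
    Xop N 1 * Xop N n = Xop N (n + 1) + (2 * N - 1) • Xop N (n - 1) := by
  ext g
  rw [coeff_Xop_one_mul_Xop]
  simp only [coeff_add, coeff_smul, Finsupp.add_apply, Finsupp.smul_apply, coeff_Xop]
  rcases eq_or_ne g 1 with rfl | hg
  · simp only [mul_one, norm_inv_eq, norm_mk_singleton, FreeGroup.norm_one]
    simp [show 1 ≠ n by omega, show 0 ≠ n - 1 by omega]
  · have hpos : g.norm ≠ 0 := norm_eq_zero.not.mpr hg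
    rw [sum_norm_inv_mk_singleton_mul hg (fun m ↦ if m = n then (1 : ℂ) else 0),
      card_fin_prod_bool]
    simp only [show g.norm - 1 = n ↔ g.norm = n + 1 by omega,
      show g.norm + 1 = n ↔ g.norm = n - 1 by omega]

theorem Xop_one_mul_Xop_one : Xop N 1 * Xop N 1 = Xop N 2 + (2 * N) • Xop N 0 := by
  ext g
  rw [coeff_Xop_one_mul_Xop]
  simp only [coeff_add, coeff_smul, Finsupp.add_apply, Finsupp.smul_apply, coeff_Xop]
  rcases eq_or_ne g 1 with rfl | hg
  · simp only [mul_one, norm_inv_eq, norm_mk_singleton, FreeGroup.norm_one]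
    simp [mul_comm]
  · have hpos : g.norm ≠ 0 := norm_eq_zero.not.mpr hg
    rw [sum_norm_inv_mk_singleton_mul hg (fun m ↦ if m = 1 then (1 : ℂ) else 0)]
    simp [show g.norm - 1 = 1 ↔ g.norm = 2 by omega, hpos]

theorem tr_add (a b : MonoidAlgebra ℂ (FreeGroup (Fin N))) : tr (a + b) = tr a + tr b := rfl

theorem tr_nsmul (k : ℕ) (a : MonoidAlgebra ℂ (FreeGroup (Fin N))) : tr (k • a) = k * tr a := by
  rw [tr, tr, coeff_smul, Finsupp.smul_apply, nsmul_eq_mul]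

theorem tr_sum {ι : Type*} (s : Finset ι) (f : ι → MonoidAlgebra ℂ (FreeGroup (Fin N))) :
    tr (∑ i ∈ s, f i) = ∑ i ∈ s, tr (f i) := by
  rw [tr, coeff_sum, Finsupp.finsetSum_apply]
  rfl

theorem tr_Xop_of_ne_zero {n : ℕ} (hn : n ≠ 0) : tr (Xop N n) = 0 := by
  simp [tr, coeff_Xop, hn.symm]

theorem tr_pow_mul_Xop_of_lt {m n : ℕ} (hmn : m < n) : tr (Xop N 1 ^ m * Xop N n) = 0 := by
  rw [pow_mul_eq_sum_of_lt _ _ _ (fun _ ↦ Xop_one_mul_Xop) hmn, tr_sum]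
  refine sum_eq_zero fun i hi ↦ ?_
  have hi : i ≤ m := Nat.lt_succ_iff.mp (mem_range.mp hi)
  rw [tr_nsmul, tr_Xop_of_ne_zero (by omega), mul_zero]

end GroupAlgebra

theorem stmt_10_general (N : ℕ) (k n k' : ℕ) (hn : 1 ≤ n)
    (hk : k = n + k') (hk' : k' < 2 * n) :
    tr ((Xop N 1) ^ k * Xop N n) =
      (∑ i ∈ (Finset.Icc 1 (n - 1)).filter (fun i => 2 * n - 2 * i ≤ k'),
        (n.choose i * (2 * N - 1) ^ i : ℕ) * tr ((Xop N 1) ^ k' * Xop N (2 * n - 2 * i)))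
      + (2 * N * (2 * N - 1) ^ (n - 1) : ℕ) * tr ((Xop N 1) ^ k') := by
  subst hk
  rw [add_comm n k', pow_add, mul_assoc,
    pow_mul_self_eq_sum _ _ _ (fun _ ↦ Xop_one_mul_Xop) _ Xop_one_mul_Xop_one hn, Xop_zero,
    mul_add, mul_sum, tr_add, tr_sum]
  simp only [mul_smul_comm, mul_one, tr_nsmul]
  congr 1
  refine (sum_subset (fun i hi ↦ ?_) fun i hi hi' ↦ ?_).symm
  · simp only [mem_filter, mem_Icc] at hi
    exact mem_range.mpr (by omega)
  · simp only [mem_filter, mem_Icc] at hi'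
    have hi : i < n := mem_range.mp hi
    rw [tr_pow_mul_Xop_of_lt (show k' < 2 * n - 2 * i by omega), mul_zero]

theorem stmt_10 (N : ℕ) (hN : 1 ≤ N) (k n k' : ℕ) (hn : 1 ≤ n)
    (hk : k = n + k') (hk' : k' < 2 * n) :
    tr ((Xop N 1) ^ k * Xop N n) =
      (∑ i ∈ (Finset.Icc 1 (n - 1)).filter (fun i => 2 * n - 2 * i ≤ k'),
        (n.choose i * (2 * N - 1) ^ i : ℕ) * tr ((Xop N 1) ^ k' * Xop N (2 * n - 2 * i)))
      + (2 * N * (2 * N - 1) ^ (n - 1) : ℕ) * tr ((Xop N 1) ^ k') :=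
  stmt_10_general N k n k' hn hk hk'
end

section
/- In the complex group algebra of the free group F_N on N ≥ 1 generators, for all k ≥ 0 and n ≥ 1 one has x^k · X_n = X_n · x^k, where x = X_1 is the generating operator. -/
/-! Multiplying a nontrivial reduced word `u` on the left by a letter shortens it for exactly
one letter (the inverse of the first letter of `u`) and lengthens it by one for all others, so
up to a permutation of the letters the lengths `|s u|` depend only on `|u|`. If the coefficients
of `f` depend only on length, the coefficient of `u` in `x f` is a sum over the letters `s` of the
values at `|s⁻¹ u|`, and in `f x` of the values at `|u s⁻¹| = |s u⁻¹|`. As the letters are closed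
under inversion, these are sums over `|s u|` and `|s u⁻¹|`, which agree because `|u⁻¹| = |u|`.
So `x` commutes with every `X_n`, hence so do its powers. -/

namespace FreeGroup

variable {α : Type*}

lemma inv_mk_singleton (p : α × Bool) : (mk [p])⁻¹ = mk [(p.1, !p.2)] := by
  simp [inv_mk, invRev]

variable [DecidableEq α]

lemma toWord_mk_singleton (p : α × Bool) : (mk [p]).toWord = [p] := by
  rw [toWord_mk, reduce_singleton]

lemma mk_singleton_injective : Function.Injective fun p : α × Bool => mk [p] := fun p q h => by
  simpa [toWord_mk_singleton] using congrArg toWord h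

lemma setOf_norm_eq_one : {w : FreeGroup α | norm w = 1} = Set.range fun p => mk [p] := by
  ext w
  refine ⟨fun hw => ?_, ?_⟩
  · obtain ⟨p, hp⟩ := List.length_eq_one_iff.mp hw
    exact ⟨p, toWord_injective (by simp [hp])⟩
  · rintro ⟨p, rfl⟩
    simp [norm]

lemma finite_setOf_norm_eq [Finite α] (n : ℕ) : {w : FreeGroup α | norm w = n}.Finite :=
  (List.finite_length_eq (α := α × Bool) n).preimage toWord_injective.injOn

lemma norm_mk_singleton_mul_of_toWord_eq_cons (p : α × Bool) {u : FreeGroup α}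
    {hd : α × Bool} {tl : List (α × Bool)} (hu : u.toWord = hd :: tl) :
    norm (mk [p] * u) = if p = (hd.1, !hd.2) then tl.length else tl.length + 2 := by
  have hreduced : reduce (hd :: tl) = hd :: tl := hu ▸ u.reduce_toWord
  rw [norm, ← u.mk_toWord, mul_mk, toWord_mk, hu, List.singleton_append, reduce.cons, hreduced]
  obtain ⟨a, b⟩ := p
  obtain ⟨c, d⟩ := hd
  by_cases h : a = c ∧ b = !d
  · simp [h]
  · simp only [Prod.mk.injEq] at h ⊢
    simp [h]

lemma exists_perm_norm_mk_singleton_mul {u v : FreeGroup α} (h : norm u = norm v) :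
    ∃ σ : Equiv.Perm (α × Bool), ∀ p, norm (mk [σ p] * v) = norm (mk [p] * u) := by
  rcases hu : u.toWord with _ | ⟨hd, tl⟩ <;> rcases hv : v.toWord with _ | ⟨hd', tl'⟩
  · rw [toWord_eq_nil_iff] at hu hv
    exact ⟨1, fun p => by rw [hu, hv]; rfl⟩
  · simp [norm, hu, hv] at h
  · simp [norm, hu, hv] at h
  · have htl : tl.length = tl'.length := by simpa [norm, hu, hv] using h
    -- swap the letter that cancels against the first letter of `u` with the one for `v`
    refine ⟨Equiv.swap (hd.1, !hd.2) (hd'.1, !hd'.2), fun p => ?_⟩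
    simp only [norm_mk_singleton_mul_of_toWord_eq_cons _ hu,
      norm_mk_singleton_mul_of_toWord_eq_cons _ hv, Equiv.swap_apply_eq_iff,
      Equiv.swap_apply_right, htl]

variable [Fintype α] {M : Type*} [AddCommMonoid M]

lemma sum_norm_mk_singleton_mul_congr (f : ℕ → M) {u v : FreeGroup α} (h : norm u = norm v) :
    ∑ p, f (norm (mk [p] * u)) = ∑ p, f (norm (mk [p] * v)) := by
  obtain ⟨σ, hσ⟩ := exists_perm_norm_mk_singleton_mul h
  simp only [← hσ]
  exact Equiv.sum_comp σ fun p => f (norm (mk [p] * v))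

lemma sum_norm_mul_mk_singleton (f : ℕ → M) (u : FreeGroup α) :
    ∑ p, f (norm (u * mk [p])) = ∑ p, f (norm (mk [p] * u)) := by
  have hinv (p : α × Bool) : norm (u * mk [p]) = norm (mk [(p.1, !p.2)] * u⁻¹) := by
    rw [← norm_inv_eq, mul_inv_rev, inv_mk_singleton]
  simp only [hinv]
  refine (Equiv.sum_comp (Equiv.prodCongr (Equiv.refl α) Equiv.boolNot)
    (fun p => f (norm (mk [p] * u⁻¹)))).trans ?_
  exact sum_norm_mk_singleton_mul_congr f norm_inv_eq

open MonoidAlgebra in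
theorem commute_sum_single_mk_singleton {R : Type*} [Semiring R]
    {f : MonoidAlgebra R (FreeGroup α)} (r : ℕ → R) (hf : ∀ w, f.coeff w = r (norm w)) :
    Commute (∑ p : α × Bool, single (mk [p]) (1 : R)) f := by
  ext u
  have hleft : ((∑ p : α × Bool, single (mk [p]) (1 : R)) * f).coeff u
      = ∑ p, r (norm (u⁻¹ * mk [p])) := by
    simp only [Finset.sum_mul, coeff_sum, Finsupp.finsetSum_apply, coeff_single_mul_apply,
      one_mul, hf]
    simp only [← norm_inv_eq (x := (mk [_])⁻¹ * u), mul_inv_rev, inv_inv]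
  have hright : (f * ∑ p : α × Bool, single (mk [p]) (1 : R)).coeff u
      = ∑ p, r (norm (mk [p] * u⁻¹)) := by
    simp only [Finset.mul_sum, coeff_sum, Finsupp.finsetSum_apply, coeff_mul_single_apply,
      mul_one, hf]
    simp only [← norm_inv_eq (x := u * (mk [_])⁻¹), mul_inv_rev, inv_inv]
  rw [hleft, hright, sum_norm_mul_mk_singleton]

end FreeGroup

open FreeGroup MonoidAlgebra

lemma Xop_coeff (N n : ℕ) (w : FreeGroup (Fin N)) :
    (Xop N n).coeff w = if w.norm = n then 1 else 0 := by
  change (∑ᶠ v ∈ {v | v.norm = n}, of ℂ _ v).coeff w = _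
  rw [finsum_mem_eq_finite_toFinset_sum _ (finite_setOf_norm_eq n)]
  simp [coeff_sum, Finsupp.finsetSum_apply, Finsupp.single_apply]

lemma Xop_one (N : ℕ) : Xop N 1 = ∑ p : Fin N × Bool, single (mk [p]) (1 : ℂ) := by
  rw [Xop, show {w : FreeGroup (Fin N) | w.toWord.length = 1} = _ from setOf_norm_eq_one,
    finsum_mem_range mk_singleton_injective, finsum_eq_sum_of_fintype]
  rfl

theorem stmt_12_general (N : ℕ) (k n : ℕ) :
    (Xop N 1) ^ k * Xop N n = Xop N n * (Xop N 1) ^ k := by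
  have hcomm : Commute (Xop N 1) (Xop N n) := by
    rw [Xop_one]
    exact commute_sum_single_mk_singleton (fun m => if m = n then 1 else 0) (Xop_coeff N n)
  exact (hcomm.pow_left k).eq

theorem stmt_12 (N : ℕ) (hN : 1 ≤ N) (k n : ℕ) (hn : 1 ≤ n) :
    (Xop N 1) ^ k * Xop N n = Xop N n * (Xop N 1) ^ k :=
  stmt_12_general N k n
end
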